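/- Let g > 0, h_ℓ, h_r > 0, u_ℓ, u_r ∈ ℝ, and define the shallow water depth function φ(h) = f(h;h_ℓ) + f(h;h_r) + u_r − u_ℓ, where f(h;h₀) = 2*(sqrt(g*h) − sqrt(g*h₀)) if h ≤ h₀ and f(h;h₀) = (h − h₀)*sqrt((g/2)*(h + h₀)/(h*h₀)) if h > h₀. Then φ'(h) > 0 for all h > 0. -/

import Mathlib

/-!
Each wave curve glues a rarefaction branch `2 (√(g h) - √(g h₀))` to a shock branch
`(h - h₀) √(g (h + h₀) / (2 h h₀))` at `h = h₀`. Both branches have positive derivative on `(0, ∞)`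
(for the shock branch it equals `g (2h² + h h₀ + h₀²) / (4 h₀ h² √(g (h + h₀) / (2 h h₀)))`), and
at `h₀` both derivatives equal `g / √(g h₀)`, so the glued curve is differentiable there too.
-/

noncomputable def swWave (g h₀ : ℝ) : ℝ → ℝ := fun h =>
  if h ≤ h₀ then 2 * (Real.sqrt (g * h) - Real.sqrt (g * h₀))
  else (h - h₀) * Real.sqrt ((g / 2) * (h + h₀) / (h * h₀))

noncomputable def swDepthFun (g hl hr ul ur : ℝ) : ℝ → ℝ := fun h =>
  swWave g hl h + swWave g hr h + ur - ul

open Real Set Filter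

noncomputable def swRarefaction (g h₀ h : ℝ) : ℝ := 2 * (√(g * h) - √(g * h₀))

noncomputable def swShock (g h₀ h : ℝ) : ℝ := (h - h₀) * √((g / 2) * (h + h₀) / (h * h₀))

noncomputable def swShockDeriv (g h₀ h : ℝ) : ℝ :=
  √((g / 2) * (h + h₀) / (h * h₀)) +
    (h - h₀) * (-(g / 2) / h ^ 2 / (2 * √((g / 2) * (h + h₀) / (h * h₀))))

theorem swWave_eq_ite (g h₀ : ℝ) :
    swWave g h₀ = fun h => if h ≤ h₀ then swRarefaction g h₀ h else swShock g h₀ h :=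
  rfl

theorem hasDerivAt_ite_le {f₁ f₂ : ℝ → ℝ} {a d : ℝ} (h₁ : HasDerivAt f₁ d a)
    (h₂ : HasDerivAt f₂ d a) (ha : f₁ a = f₂ a) :
    HasDerivAt (fun x => if x ≤ a then f₁ x else f₂ x) d a := by
  have hl : HasDerivWithinAt (fun x => if x ≤ a then f₁ x else f₂ x) d (Iic a) a :=
    h₁.hasDerivWithinAt.congr (fun x hx => if_pos hx) (if_pos le_rfl)
  have hr : HasDerivWithinAt (fun x => if x ≤ a then f₁ x else f₂ x) d (Ici a) a := by
    refine h₂.hasDerivWithinAt.congr (fun x hx => ?_) (by simp [ha])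
    split_ifs with hxa
    · rw [le_antisymm hxa hx, ha]
    · rfl
  simpa only [Iic_union_Ici, hasDerivWithinAt_univ] using hl.union hr

section

variable {g h₀ h : ℝ}

theorem hasDerivAt_swRarefaction (hgh : g * h ≠ 0) :
    HasDerivAt (swRarefaction g h₀) (g / √(g * h)) h := by
  have hlin : HasDerivAt (fun x => g * x) g h := by
    simpa using (hasDerivAt_id h).const_mul g
  have hsqrt := (Real.hasDerivAt_sqrt hgh).comp h hlin
  exact ((hsqrt.sub_const (√(g * h₀))).const_mul 2).congr_deriv (by ring)

theorem hasDerivAt_swShock (hg : 0 < g) (hh₀ : 0 < h₀) (hh : 0 < h) :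
    HasDerivAt (swShock g h₀) (swShockDeriv g h₀ h) h := by
  have hnum : HasDerivAt (fun x => (g / 2) * (x + h₀)) (g / 2) h := by
    simpa using ((hasDerivAt_id h).add_const h₀).const_mul (g / 2)
  have hden : HasDerivAt (fun x => x * h₀) h₀ h := by
    simpa using (hasDerivAt_id h).mul_const h₀
  have hrad : HasDerivAt (fun x => (g / 2) * (x + h₀) / (x * h₀)) (-(g / 2) / h ^ 2) h := by
    refine (hnum.div hden (by positivity)).congr_deriv ?_
    field_simp
    ring
  have hsqrt := (Real.hasDerivAt_sqrt (by positivity)).comp h hrad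
  refine (((hasDerivAt_id h).sub_const h₀).mul hsqrt).congr_deriv ?_
  simp only [Function.comp, id, swShockDeriv]
  ring

theorem swShockDeriv_eq (hg : 0 < g) (hh₀ : 0 < h₀) (hh : 0 < h) :
    swShockDeriv g h₀ h = g * (2 * h ^ 2 + h * h₀ + h₀ ^ 2) /
      (4 * h₀ * h ^ 2 * √((g / 2) * (h + h₀) / (h * h₀))) := by
  have hs : 0 < √((g / 2) * (h + h₀) / (h * h₀)) := Real.sqrt_pos.2 (by positivity)
  have hs2 := Real.sq_sqrt (show 0 ≤ (g / 2) * (h + h₀) / (h * h₀) by positivity)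
  unfold swShockDeriv
  set s := √((g / 2) * (h + h₀) / (h * h₀))
  field_simp
  field_simp at hs2
  linear_combination (8 * h) * hs2

theorem swShockDeriv_pos (hg : 0 < g) (hh₀ : 0 < h₀) (hh : 0 < h) : 0 < swShockDeriv g h₀ h := by
  rw [swShockDeriv_eq hg hh₀ hh]
  positivity

theorem swShockDeriv_self (hg : 0 < g) (hh₀ : 0 < h₀) :
    swShockDeriv g h₀ h₀ = g / √(g * h₀) := by
  rw [swShockDeriv, sub_self, zero_mul, add_zero,
    show g / 2 * (h₀ + h₀) / (h₀ * h₀) = g / h₀ by field_simp; ring,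
    Real.sqrt_div hg.le, Real.sqrt_mul hg.le]
  have := Real.mul_self_sqrt hg.le
  field_simp
  linarith

theorem exists_hasDerivAt_swWave_pos (hg : 0 < g) (hh₀ : 0 < h₀) (hh : 0 < h) :
    ∃ d, 0 < d ∧ HasDerivAt (swWave g h₀) d h := by
  rw [swWave_eq_ite]
  rcases lt_trichotomy h h₀ with hlt | rfl | hgt
  · refine ⟨_, by positivity, (hasDerivAt_swRarefaction (h₀ := h₀) (by positivity)).congr_of_eventuallyEq ?_⟩
    filter_upwards [Iio_mem_nhds hlt] with x hx
    exact if_pos (le_of_lt hx)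
  · refine ⟨_, by positivity, hasDerivAt_ite_le (hasDerivAt_swRarefaction (by positivity)) ?_ ?_⟩
    · rw [← swShockDeriv_self hg hh]
      exact hasDerivAt_swShock hg hh hh
    · simp [swRarefaction, swShock]
  · refine ⟨_, swShockDeriv_pos hg hh₀ hh,
      (hasDerivAt_swShock hg hh₀ hh).congr_of_eventuallyEq ?_⟩
    filter_upwards [Ioi_mem_nhds hgt] with x hx
    exact if_neg (not_le.2 hx)

end

theorem stmt_10 (g hl hr ul ur : ℝ) (hg : 0 < g) (hhl : 0 < hl) (hhr : 0 < hr) :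
    ∀ h : ℝ, 0 < h → 0 < deriv (swDepthFun g hl hr ul ur) h := by
  intro h hh
  obtain ⟨dl, hdl, hasDeriv_l⟩ := exists_hasDerivAt_swWave_pos hg hhl hh
  obtain ⟨dr, hdr, hasDeriv_r⟩ := exists_hasDerivAt_swWave_pos hg hhr hh
  have hasDeriv : HasDerivAt (swDepthFun g hl hr ul ur) (dl + dr) h :=
    ((hasDeriv_l.add hasDeriv_r).add_const ur).sub_const ul
  rw [hasDeriv.deriv]
  positivity
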